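/- arXiv:1209.4851 — 5 statements merged into one kernel-verified Lean document; each statement's English description precedes it below -/
import Mathlib

section
/- If a sequence (x_n) in a Banach space converges uniformly weakly to x, then every subsequence of (x_n) is Cesàro-convergent to x. -/
/-!
Uniform weak convergence implies weak convergence, so `x n - x₀` is bounded in norm by some `C`
(uniform boundedness in the dual). Given `ε`, let `n₀` bound the number of indices at which a
functional of norm `≤ 1` sees `x n - x₀` of size `≥ ε`. Testing the Cesàro mean of `N` terms of a
subsequence against a norming functional, at most `n₀` terms contribute up to `C` and the rest
less than `ε`, so the mean is within `n₀ C / N + ε` of `x₀`.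
-/

open Filter Topology Finset

theorem Set.finite_of_forall_finset_subset_card_le {α : Type*} {s : Set α} {n : ℕ}
    (h : ∀ t : Finset α, ↑t ⊆ s → t.card ≤ n) : s.Finite := by
  by_contra hs
  obtain ⟨t, hts, htn⟩ := Set.Infinite.exists_subset_card_eq hs (n + 1)
  have := h t hts
  omega

theorem tendsto_nhds_zero_of_forall_card_le {u : ℕ → ℝ}
    (h : ∀ ε : ℝ, 0 < ε → ∃ n₀ : ℕ, ∀ s : Finset ℕ, (∀ n ∈ s, ε ≤ |u n|) → s.card ≤ n₀) :
    Tendsto u atTop (𝓝 0) := by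
  rw [Metric.tendsto_nhds, ← Nat.cofinite_eq_atTop]
  intro ε hε
  obtain ⟨n₀, hn₀⟩ := h ε hε
  refine Set.finite_of_forall_finset_subset_card_le fun t ht => hn₀ t fun n hn => ?_
  simpa [Real.dist_eq] using ht hn

theorem exists_norm_le_of_weakly_bounded {𝕜 E ι : Type*} [RCLike 𝕜] [NormedAddCommGroup E]
    [NormedSpace 𝕜 E] {y : ι → E}
    (h : ∀ f : StrongDual 𝕜 E, ‖f‖ ≤ 1 → ∃ C, ∀ i, ‖f (y i)‖ ≤ C) : ∃ C, ∀ i, ‖y i‖ ≤ C := by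
  have hbdd (f : StrongDual 𝕜 E) : ∃ C, ∀ i, ‖f (y i)‖ ≤ C := by
    set c : ℝ := (‖f‖ + 1)⁻¹
    have hc : 0 < c := by positivity
    have hcf : ‖(c : 𝕜) • f‖ ≤ 1 := by
      rw [norm_smul, RCLike.norm_ofReal, abs_of_pos hc, inv_mul_le_one₀ (by positivity)]
      linarith
    obtain ⟨C, hC⟩ := h _ hcf
    refine ⟨c⁻¹ * C, fun i => ?_⟩
    have := hC i
    rw [smul_apply, norm_smul, RCLike.norm_ofReal, abs_of_pos hc] at this
    rwa [le_inv_mul_iff₀ hc]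
  obtain ⟨C, hC⟩ := banach_steinhaus (g := fun i => NormedSpace.inclusionInDoubleDual 𝕜 E (y i))
    fun f => by simpa using hbdd f
  exact ⟨C, fun i => (NormedSpace.inclusionInDoubleDualLi 𝕜).norm_map (y i) ▸ hC i⟩

theorem Finset.sum_le_card_filter_mul_add {ι : Type*} (s : Finset ι) {b : ι → ℝ} {C ε : ℝ}
    (hε : 0 ≤ ε) (hC : ∀ i ∈ s, b i ≤ C) :
    ∑ i ∈ s, b i ≤ #{i ∈ s | ε ≤ b i} * C + #s * ε := by
  rw [← sum_filter_add_sum_filter_not s (fun i => ε ≤ b i), ← nsmul_eq_mul, ← nsmul_eq_mul]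
  refine add_le_add (sum_le_card_nsmul _ _ _ fun i hi => hC i (mem_filter.1 hi).1) ?_
  calc ∑ i ∈ s with ¬ε ≤ b i, b i ≤ #{i ∈ s | ¬ε ≤ b i} • ε :=
        sum_le_card_nsmul _ _ _ fun i hi => (not_le.1 (mem_filter.1 hi).2).le
    _ ≤ #s • ε := nsmul_le_nsmul_left hε (card_filter_le _ _)

theorem Finset.inv_card_smul_sum_sub {ι E : Type*} [AddCommGroup E] [Module ℝ E] {s : Finset ι}
    (hs : s.Nonempty) (v : ι → E) (c : E) :
    (#s : ℝ)⁻¹ • ∑ k ∈ s, v k - c = (#s : ℝ)⁻¹ • ∑ k ∈ s, (v k - c) := by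
  have : (#s : ℝ) ≠ 0 := by exact_mod_cast hs.card_ne_zero
  rw [sum_sub_distrib, smul_sub, sum_const, ← Nat.cast_smul_eq_nsmul ℝ, inv_smul_smul₀ this]

section UniformlyWeakly

variable {X : Type*} [NormedAddCommGroup X] [NormedSpace ℝ X]

def UniformlyWeaklyTendsto (x : ℕ → X) (x₀ : X) : Prop :=
  ∀ ε : ℝ, 0 < ε → ∃ n₀ : ℕ, ∀ f : X →L[ℝ] ℝ, ‖f‖ ≤ 1 →
    ∀ s : Finset ℕ, (∀ n ∈ s, ε ≤ |f (x n - x₀)|) → s.card ≤ n₀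

variable {x : ℕ → X} {x₀ : X}

theorem UniformlyWeaklyTendsto.tendsto_apply_sub (huw : UniformlyWeaklyTendsto x x₀)
    {f : X →L[ℝ] ℝ} (hf : ‖f‖ ≤ 1) : Tendsto (fun n => f (x n - x₀)) atTop (𝓝 0) :=
  tendsto_nhds_zero_of_forall_card_le fun ε hε => (huw ε hε).imp fun _ h => h f hf

theorem UniformlyWeaklyTendsto.exists_norm_sub_le (huw : UniformlyWeaklyTendsto x x₀) :
    ∃ C, ∀ n, ‖x n - x₀‖ ≤ C :=
  exists_norm_le_of_weakly_bounded fun _ hf =>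
    isBounded_iff_forall_norm_le.1 (Metric.isBounded_range_of_tendsto _ (huw.tendsto_apply_sub hf))
      |>.imp fun _ hC n => hC _ ⟨n, rfl⟩

theorem norm_average_sub_le_of_card_le {φ : ℕ → ℕ} (hφ : φ.Injective) {C ε : ℝ} {n₀ N : ℕ}
    (hε : 0 ≤ ε) (hC : ∀ n, ‖x n - x₀‖ ≤ C)
    (hn₀ : ∀ f : X →L[ℝ] ℝ, ‖f‖ ≤ 1 → ∀ s : Finset ℕ, (∀ n ∈ s, ε ≤ |f (x n - x₀)|) → s.card ≤ n₀)
    (hN : N ≠ 0) :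
    ‖(N : ℝ)⁻¹ • ∑ k ∈ range N, x (φ k) - x₀‖ ≤ n₀ * C / N + ε := by
  have hC₀ : 0 ≤ C := (norm_nonneg _).trans (hC 0)
  have hNpos : (0 : ℝ) < N := by positivity
  set w := ∑ k ∈ range N, (x (φ k) - x₀)
  obtain ⟨g, hg, hgw⟩ := exists_dual_vector'' ℝ w
  have hbad : #{k ∈ range N | ε ≤ |g (x (φ k) - x₀)|} ≤ n₀ := by
    rw [← card_image_of_injective _ hφ]
    exact hn₀ g hg _ fun n hn => by
      obtain ⟨k, hk, rfl⟩ := mem_image.1 hn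
      exact (mem_filter.1 hk).2
  have hw : ‖w‖ ≤ n₀ * C + N * ε := calc
    ‖w‖ = ∑ k ∈ range N, g (x (φ k) - x₀) := by rw [← map_sum, hgw, RCLike.ofReal_real_eq_id, id]
    _ ≤ ∑ k ∈ range N, |g (x (φ k) - x₀)| := sum_le_sum fun k _ => le_abs_self _
    _ ≤ #{k ∈ range N | ε ≤ |g (x (φ k) - x₀)|} * C + #(range N) * ε :=
      sum_le_card_filter_mul_add _ hε fun k _ => by
        rw [← Real.norm_eq_abs]
        exact (g.le_of_opNorm_le hg _).trans (by rw [one_mul]; exact hC _)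
    _ ≤ n₀ * C + N * ε := by rw [card_range]; gcongr
  have hmean := inv_card_smul_sum_sub (nonempty_range_iff.2 hN) (fun k => x (φ k)) x₀
  rw [card_range] at hmean
  rw [hmean, norm_smul, norm_inv, Real.norm_natCast, inv_mul_le_iff₀ hNpos]
  calc ‖w‖ ≤ n₀ * C + N * ε := hw
    _ = N * (n₀ * C / N + ε) := by field_simp

theorem UniformlyWeaklyTendsto.tendsto_average_comp (huw : UniformlyWeaklyTendsto x x₀)
    {φ : ℕ → ℕ} (hφ : φ.Injective) :
    Tendsto (fun N : ℕ => (N : ℝ)⁻¹ • ∑ k ∈ range N, x (φ k)) atTop (𝓝 x₀) := by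
  obtain ⟨C, hC⟩ := huw.exists_norm_sub_le
  rw [tendsto_iff_norm_sub_tendsto_zero, Metric.tendsto_nhds]
  intro ε hε
  obtain ⟨n₀, hn₀⟩ := huw (ε / 2) (half_pos hε)
  have hsmall : ∀ᶠ N : ℕ in atTop, n₀ * C / N < ε / 2 :=
    (tendsto_const_div_atTop_nhds_zero_nat _).eventually (gt_mem_nhds (half_pos hε))
  filter_upwards [hsmall, eventually_ne_atTop 0] with N hsmallN hN
  rw [dist_zero_right, norm_norm]
  calc _ ≤ n₀ * C / N + ε / 2 := norm_average_sub_le_of_card_le hφ (half_pos hε).le hC hn₀ hN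
    _ < ε := by linarith

end UniformlyWeakly

theorem uniformly_weakly_convergent_cesaro_general {X : Type*} [NormedAddCommGroup X]
    [NormedSpace ℝ X] (x : ℕ → X) (x₀ : X)
    (huw : ∀ ε : ℝ, 0 < ε → ∃ n₀ : ℕ, ∀ f : X →L[ℝ] ℝ, ‖f‖ ≤ 1 →
      ∀ s : Finset ℕ, (∀ n ∈ s, ε ≤ |f (x n - x₀)|) → s.card ≤ n₀) :
    ∀ φ : ℕ → ℕ, StrictMono φ →
      Tendsto (fun N : ℕ => (N : ℝ)⁻¹ • ∑ k ∈ Finset.range N, x (φ k)) atTop (nhds x₀) :=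
  fun _ hφ => UniformlyWeaklyTendsto.tendsto_average_comp huw hφ.injective

/-- If `(x n)` converges uniformly weakly to `x₀` in a Banach space, then every subsequence
of `(x n)` is Cesàro-convergent to `x₀`. -/
theorem uniformly_weakly_convergent_cesaro {X : Type*} [NormedAddCommGroup X]
    [NormedSpace ℝ X] [CompleteSpace X] (x : ℕ → X) (x₀ : X)
    (huw : ∀ ε : ℝ, 0 < ε → ∃ n₀ : ℕ, ∀ f : X →L[ℝ] ℝ, ‖f‖ ≤ 1 →
      ∀ s : Finset ℕ, (∀ n ∈ s, ε ≤ |f (x n - x₀)|) → s.card ≤ n₀) :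
    ∀ φ : ℕ → ℕ, StrictMono φ →
      Tendsto (fun N : ℕ => (N : ℝ)⁻¹ • ∑ k ∈ Finset.range N, x (φ k)) atTop (nhds x₀) :=
  uniformly_weakly_convergent_cesaro_general x x₀ huw
end

section
/- (Gillis' Lemma) For all ε, δ > 0 and m ∈ ℕ there exists n = n(ε,δ,m) ∈ ℕ such that for any probability space (Ω,Σ,μ) and any measurable sets A_1,…,A_n with μ(A_i) ≥ ε for all i, there is a subset s ⊆ {1,…,n} of cardinality m with μ(⋂_{i∈s} A_i) ≥ (1−δ)ε^m. -/
/-!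
Let `N ω` be the number of sets `A i` containing `ω`. Then `𝔼 N = ∑ μ (A i) ≥ n ε` and
`𝔼 (N.choose m) = ∑_{#s = m} μ (⋂ i ∈ s, A i)`. The sequence `k ↦ k.choose m` is convex, so
comparing it with its supporting line at `K = ⌊n ε⌋` gives `𝔼 (N.choose m) ≥ K.choose m`
(a discrete Jensen inequality). By Bernoulli's inequality, `K.choose m ≥ (1 - δ) ε ^ m n.choose m`
once `n ε ≥ m ^ 2 / δ`, so the average of `μ (⋂ i ∈ s, A i)` over the `n.choose m` sets `s`,
and hence one of them, is at least `(1 - δ) ε ^ m`.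
-/

open MeasureTheory Finset Filter
open scoped ENNReal Nat

namespace Nat

lemma choose_mul_add_choose_succ_le_choose_add (m K : ℕ) :
    ∀ d : ℕ, K.choose m * d + K.choose (m + 1) ≤ (K + d).choose (m + 1)
  | 0 => by simp
  | d + 1 => by
    have ih := choose_mul_add_choose_succ_le_choose_add m K d
    have hmono : K.choose m ≤ (K + d).choose m := choose_le_choose _ (le_add_right _ _)
    rw [← add_assoc, choose_succ_succ]
    linarith

lemma choose_add_le_choose_add_choose_mul (m k : ℕ) :
    ∀ d : ℕ, (k + d).choose (m + 1) ≤ k.choose (m + 1) + (k + d).choose m * d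
  | 0 => by simp
  | d + 1 => by
    have ih := choose_add_le_choose_add_choose_mul m k d
    have hmono : (k + d).choose m ≤ (k + d + 1).choose m := choose_le_choose _ (le_succ _)
    have := Nat.mul_le_mul_right d hmono
    rw [← add_assoc, choose_succ_succ]
    linarith

/-- The supporting line of slope `K.choose m` at `K` of the convex sequence `k ↦ k.choose (m + 1)`,
written without subtraction. -/
lemma choose_mul_add_choose_succ_le (m K k : ℕ) :
    K.choose m * k + K.choose (m + 1) ≤ k.choose (m + 1) + K.choose m * K := by
  rcases le_total K k with h | h
  · obtain ⟨d, rfl⟩ := Nat.exists_eq_add_of_le h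
    have := choose_mul_add_choose_succ_le_choose_add m K d
    linarith
  · obtain ⟨d, rfl⟩ := Nat.exists_eq_add_of_le h
    have := choose_add_le_choose_add_choose_mul m k d
    linarith

end Nat

lemma one_sub_mul_div_mul_pow_le_sub_pow {x c : ℝ} (n : ℕ) (hx : 0 < x) (hc : c ≤ 2 * x) :
    (1 - n * c / x) * x ^ n ≤ (x - c) ^ n := by
  have hbernoulli : 1 + n * -(c / x) ≤ (1 + -(c / x)) ^ n :=
    one_add_mul_le_pow (by rw [neg_le_neg_iff, div_le_iff₀ hx]; linarith) n
  calc (1 - n * c / x) * x ^ n = (1 + n * -(c / x)) * x ^ n := by ring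
    _ ≤ (1 + -(c / x)) ^ n * x ^ n := by gcongr
    _ = (x - c) ^ n := by rw [← mul_pow]; congr 1; field_simp; ring

lemma one_sub_sq_div_mul_pow_div_factorial_le_choose_floor {x : ℝ} (M : ℕ) (hM : (M : ℝ) ≤ x) :
    (1 - M ^ 2 / x) * x ^ M / M ! ≤ (⌊x⌋₊.choose M : ℝ) := by
  rcases M.eq_zero_or_pos with rfl | hMpos
  · simp
  have hx : 0 < x := lt_of_lt_of_le (by exact_mod_cast hMpos) hM
  have hMfloor : M ≤ ⌊x⌋₊ := Nat.le_floor hM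
  calc (1 - M ^ 2 / x) * x ^ M / M ! = (1 - M * M / x) * x ^ M / M ! := by ring
    _ ≤ (x - M) ^ M / M ! := by
      gcongr
      exact one_sub_mul_div_mul_pow_le_sub_pow M hx (by linarith)
    _ ≤ ((⌊x⌋₊ + 1 - M : ℕ) : ℝ) ^ M / M ! := by
      gcongr
      rw [Nat.cast_sub (by omega)]
      push_cast
      linarith [Nat.lt_floor_add_one x]
    _ ≤ ⌊x⌋₊.choose M := Nat.pow_le_choose M ⌊x⌋₊

lemma one_sub_mul_pow_mul_choose_le_choose_floor {n M : ℕ} {ε δ : ℝ} (hε : 0 ≤ ε) (hδ : 0 ≤ δ)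
    (hM : (M : ℝ) ≤ n * ε) (hMδ : (M : ℝ) ^ 2 ≤ δ * (n * ε)) :
    (1 - δ) * ε ^ M * n.choose M ≤ (⌊n * ε⌋₊.choose M : ℝ) := by
  rcases le_or_gt (1 - δ) 0 with hδ1 | hδ1
  · exact (mul_nonpos_of_nonpos_of_nonneg (mul_nonpos_of_nonpos_of_nonneg hδ1 (by positivity))
      (by positivity)).trans (by positivity)
  have hMx : (M : ℝ) ^ 2 / (n * ε) ≤ δ := div_le_of_le_mul₀ (by positivity) hδ hMδ
  calc (1 - δ) * ε ^ M * n.choose M ≤ (1 - δ) * ε ^ M * (n ^ M / M !) := by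
        gcongr
        exact_mod_cast Nat.choose_le_pow_div M n
    _ = (1 - δ) * (n * ε) ^ M / M ! := by ring
    _ ≤ (1 - M ^ 2 / (n * ε)) * (n * ε) ^ M / M ! := by gcongr
    _ ≤ ⌊n * ε⌋₊.choose M := one_sub_sq_div_mul_pow_div_factorial_le_choose_floor M hM

section CountingFunction

open scoped Classical

variable {Ω ι : Type*} {A : ι → Set Ω}

lemma choose_card_filter_mem_eq_sum_indicator (t : Finset ι) (m : ℕ) (ω : Ω) :
    ((#{i ∈ t | ω ∈ A i}).choose m : ℝ≥0∞) =
      ∑ s ∈ t.powersetCard m, (⋂ i ∈ s, A i).indicator 1 ω := by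
  have hfilter : {s ∈ t.powersetCard m | ∀ i ∈ s, ω ∈ A i} = {i ∈ t | ω ∈ A i}.powersetCard m := by
    ext s
    simp only [mem_filter, mem_powersetCard, subset_iff]
    aesop
  simp only [Set.indicator_apply, Set.mem_iInter, Pi.one_apply, sum_boole, hfilter,
    card_powersetCard]

variable [MeasurableSpace Ω] {μ : Measure Ω}

lemma lintegral_choose_card_filter_mem (hA : ∀ i, MeasurableSet (A i)) (t : Finset ι) (m : ℕ) :
    ∫⁻ ω, ((#{i ∈ t | ω ∈ A i}).choose m : ℝ≥0∞) ∂μ =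
      ∑ s ∈ t.powersetCard m, μ (⋂ i ∈ s, A i) := by
  have hmeas (s : Finset ι) : MeasurableSet (⋂ i ∈ s, A i) := s.measurableSet_biInter fun i _ ↦ hA i
  simp only [choose_card_filter_mem_eq_sum_indicator]
  rw [lintegral_finsetSum _ fun s _ ↦ measurable_one.indicator (hmeas s)]
  exact sum_congr rfl fun s _ ↦ lintegral_indicator_one (hmeas s)

lemma lintegral_card_filter_mem (hA : ∀ i, MeasurableSet (A i)) (t : Finset ι) :
    ∫⁻ ω, (#{i ∈ t | ω ∈ A i} : ℝ≥0∞) ∂μ = ∑ i ∈ t, μ (A i) := by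
  simpa [powersetCard_one] using lintegral_choose_card_filter_mem (μ := μ) hA t 1

lemma choose_le_sum_measure_biInter [IsProbabilityMeasure μ] (hA : ∀ i, MeasurableSet (A i))
    {t : Finset ι} {K : ℕ} (hK : (K : ℝ≥0∞) ≤ ∑ i ∈ t, μ (A i)) (m : ℕ) :
    (K.choose m : ℝ≥0∞) ≤ ∑ s ∈ t.powersetCard m, μ (⋂ i ∈ s, A i) := by
  cases m with
  | zero => simp
  | succ m =>
    have hpoint (ω : Ω) : (K.choose m : ℝ≥0∞) * #{i ∈ t | ω ∈ A i} + K.choose (m + 1) ≤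
        (#{i ∈ t | ω ∈ A i}).choose (m + 1) + (K.choose m : ℝ≥0∞) * K := by
      exact_mod_cast Nat.choose_mul_add_choose_succ_le m K _
    rw [← ENNReal.add_le_add_iff_left (a := (K.choose m : ℝ≥0∞) * K) (by finiteness)]
    calc (K.choose m : ℝ≥0∞) * K + K.choose (m + 1)
        ≤ (K.choose m : ℝ≥0∞) * ∑ i ∈ t, μ (A i) + K.choose (m + 1) := by gcongr
      _ = ∫⁻ ω, (K.choose m : ℝ≥0∞) * #{i ∈ t | ω ∈ A i} + K.choose (m + 1) ∂μ := by
        rw [lintegral_add_right _ measurable_const, lintegral_const_mul' _ _ (by finiteness),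
          lintegral_card_filter_mem hA, lintegral_const, measure_univ, mul_one]
      _ ≤ ∫⁻ ω, (#{i ∈ t | ω ∈ A i}).choose (m + 1) + (K.choose m : ℝ≥0∞) * K ∂μ :=
        lintegral_mono hpoint
      _ = _ := by
        rw [lintegral_add_right _ measurable_const, lintegral_choose_card_filter_mem hA,
          lintegral_const, measure_univ, mul_one, add_comm]

end CountingFunction

/-- Gillis' Lemma: for all `ε, δ > 0` and `m`, there is `n` such that among any `n`
measurable sets of measure at least `ε` in a probability space, some `m` of them have
intersection of measure at least `(1 - δ) * ε ^ m`. -/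
theorem gillis_lemma (ε δ : ℝ) (hε : 0 < ε) (hδ : 0 < δ) (m : ℕ) :
    ∃ n : ℕ, ∀ (Ω : Type) (_ : MeasurableSpace Ω) (μ : Measure Ω),
      IsProbabilityMeasure μ → ∀ A : Fin n → Set Ω,
      (∀ i, MeasurableSet (A i)) → (∀ i, ENNReal.ofReal ε ≤ μ (A i)) →
      ∃ s : Finset (Fin n), s.card = m ∧
        ENNReal.ofReal ((1 - δ) * ε ^ m) ≤ μ (⋂ i ∈ s, A i) := by
  obtain ⟨n, hmn, hmε, hmδ⟩ :
      ∃ n : ℕ, m ≤ n ∧ (m : ℝ) ≤ n * ε ∧ (m : ℝ) ^ 2 / δ ≤ n * ε := by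
    have hnε := tendsto_natCast_atTop_atTop.atTop_mul_const hε
    exact ((eventually_ge_atTop m).and
      ((hnε.eventually_ge_atTop _).and (hnε.eventually_ge_atTop _))).exists
  refine ⟨n, fun Ω _ μ _ A hA hAε => ?_⟩
  have hK : (⌊n * ε⌋₊ : ℝ≥0∞) ≤ ∑ i, μ (A i) :=
    calc (⌊n * ε⌋₊ : ℝ≥0∞) ≤ ENNReal.ofReal (n * ε) := by
          rw [← ENNReal.ofReal_natCast]
          exact ENNReal.ofReal_le_ofReal (Nat.floor_le (by positivity))
      _ = ∑ _i : Fin n, ENNReal.ofReal ε := by simp [ENNReal.ofReal_mul]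
      _ ≤ ∑ i, μ (A i) := sum_le_sum fun i _ ↦ hAε i
  have hsum : ∑ _s ∈ (univ : Finset (Fin n)).powersetCard m, ENNReal.ofReal ((1 - δ) * ε ^ m) ≤
      ∑ s ∈ univ.powersetCard m, μ (⋂ i ∈ s, A i) :=
    calc ∑ _s ∈ (univ : Finset (Fin n)).powersetCard m, ENNReal.ofReal ((1 - δ) * ε ^ m)
        = ENNReal.ofReal ((1 - δ) * ε ^ m * n.choose m) := by simp [mul_comm]
      _ ≤ ENNReal.ofReal (⌊n * ε⌋₊.choose m) := ENNReal.ofReal_le_ofReal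
          (one_sub_mul_pow_mul_choose_le_choose_floor hε.le hδ.le hmε
            ((div_le_iff₀' hδ).1 hmδ))
      _ ≤ ∑ s ∈ univ.powersetCard m, μ (⋂ i ∈ s, A i) := by
          rw [ENNReal.ofReal_natCast]
          exact choose_le_sum_measure_biInter hA hK m
  obtain ⟨s, hs, hle⟩ := ENNReal.exists_le_of_sum_le
    (powersetCard_nonempty.2 (by simpa using hmn)) hsum
  exact ⟨s, (mem_powersetCard.1 hs).2, hle⟩
end

section
/- If (x_n) and (y_n) are bounded sequences in a Banach space with ∑_n ‖x_n − y_n‖ < ∞, then the set {x_n : n ∈ ℕ} is a Banach-Saks set if and only if {y_n : n ∈ ℕ} is a Banach-Saks set. -/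
/-!
The perturbation `x n - y n` tends to zero, hence so do its Cesàro means along any subsequence.
A sequence `y ∘ g` in `{y n}` either has indices `g` tending to infinity, and then a subsequence
of `x ∘ g` with convergent Cesàro means yields one of `y ∘ g`, or it takes some value infinitely
often, and then it has a constant subsequence.
-/

open Filter

/-- A subset `A` of a Banach space is a Banach-Saks set if every sequence in `A`
has a subsequence whose Cesàro means converge in norm. -/
def IsBanachSaksSet {X : Type*} [NormedAddCommGroup X] [NormedSpace ℝ X] (A : Set X) : Prop :=
  ∀ x : ℕ → X, (∀ n, x n ∈ A) → ∃ φ : ℕ → ℕ, StrictMono φ ∧ ∃ L : X,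
    Tendsto (fun N : ℕ => (N : ℝ)⁻¹ • ∑ k ∈ Finset.range N, x (φ k)) atTop (nhds L)

open Topology

theorem Nat.exists_strictMono_tendsto_of_not_tendsto_atTop {g : ℕ → ℕ}
    (hg : ¬Tendsto g atTop atTop) :
    ∃ m, ∃ ψ : ℕ → ℕ, StrictMono ψ ∧ Tendsto (g ∘ ψ) atTop (𝓝 m) := by
  obtain ⟨b, hb⟩ : ∃ b, ∃ᶠ n in atTop, g n ∈ Set.Iio b := by
    simpa only [tendsto_atTop, not_forall, not_eventually, not_le, Set.mem_Iio] using hg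
  obtain ⟨m, -, hm⟩ := tendsto_subseq_of_frequently_bounded (Set.finite_Iio b).isBounded hb
  exact ⟨m, hm⟩

section

variable {X : Type*} [NormedAddCommGroup X] [NormedSpace ℝ X]

def HasCesaroConvergentSubseq (x : ℕ → X) : Prop :=
  ∃ φ : ℕ → ℕ, StrictMono φ ∧ ∃ L : X,
    Tendsto (fun N : ℕ => (N : ℝ)⁻¹ • ∑ k ∈ Finset.range N, x (φ k)) atTop (𝓝 L)

theorem Filter.Tendsto.hasCesaroConvergentSubseq {x : ℕ → X} {L : X}
    (h : Tendsto x atTop (𝓝 L)) : HasCesaroConvergentSubseq x :=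
  ⟨id, strictMono_id, L, h.cesaro_smul⟩

theorem HasCesaroConvergentSubseq.of_comp {x : ℕ → X} {ψ : ℕ → ℕ} (hψ : StrictMono ψ)
    (h : HasCesaroConvergentSubseq (x ∘ ψ)) : HasCesaroConvergentSubseq x :=
  let ⟨φ, hφ, L, hL⟩ := h
  ⟨ψ ∘ φ, hψ.comp hφ, L, hL⟩

theorem HasCesaroConvergentSubseq.of_tendsto_sub {x y : ℕ → X}
    (h : HasCesaroConvergentSubseq x) (hxy : Tendsto (x - y) atTop (𝓝 0)) :
    HasCesaroConvergentSubseq y := by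
  obtain ⟨φ, hφ, L, hL⟩ := h
  have hdiff := (hxy.comp hφ.tendsto_atTop).cesaro_smul
  refine ⟨φ, hφ, L, ?_⟩
  simpa [smul_sub, Finset.sum_sub_distrib] using hL.sub hdiff

theorem IsBanachSaksSet.range_of_tendsto_sub {x y : ℕ → X}
    (h : IsBanachSaksSet (Set.range x)) (hxy : Tendsto (x - y) atTop (𝓝 0)) :
    IsBanachSaksSet (Set.range y) := by
  intro z hz
  choose g hg using hz
  obtain rfl : y ∘ g = z := funext hg
  by_cases hg_top : Tendsto g atTop atTop
  · exact HasCesaroConvergentSubseq.of_tendsto_sub (h (x ∘ g) fun n => ⟨g n, rfl⟩)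
      (hxy.comp hg_top)
  · obtain ⟨m, ψ, hψ, hgψ⟩ := Nat.exists_strictMono_tendsto_of_not_tendsto_atTop hg_top
    exact HasCesaroConvergentSubseq.of_comp hψ
      ((continuous_of_discreteTopology.tendsto m).comp hgψ).hasCesaroConvergentSubseq

end

theorem banachSaks_of_summable_perturbation_general {X : Type*} [NormedAddCommGroup X]
    [NormedSpace ℝ X] (x y : ℕ → X)
    (hsum : Summable fun n => ‖x n - y n‖) :
    IsBanachSaksSet (Set.range x) ↔ IsBanachSaksSet (Set.range y) := by
  have hxy : Tendsto (x - y) atTop (𝓝 0) :=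
    tendsto_zero_iff_norm_tendsto_zero.2 hsum.tendsto_atTop_zero
  have hyx : Tendsto (y - x) atTop (𝓝 0) := by
    rw [← neg_sub, ← neg_zero]
    exact hxy.neg
  exact ⟨fun h => h.range_of_tendsto_sub hxy, fun h => h.range_of_tendsto_sub hyx⟩

/-- If `(x n)` and `(y n)` are bounded sequences with `∑ ‖x n - y n‖ < ∞`, then
`{x n}` is a Banach-Saks set iff `{y n}` is a Banach-Saks set. -/
theorem banachSaks_of_summable_perturbation {X : Type*} [NormedAddCommGroup X]
    [NormedSpace ℝ X] (x y : ℕ → X)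
    (hx : ∃ C : ℝ, ∀ n, ‖x n‖ ≤ C) (hy : ∃ C : ℝ, ∀ n, ‖y n‖ ≤ C)
    (hsum : Summable fun n => ‖x n - y n‖) :
    IsBanachSaksSet (Set.range x) ↔ IsBanachSaksSet (Set.range y) :=
  banachSaks_of_summable_perturbation_general x y hsum
end

section
/- Let F be a pre-compact family on I = ⋃_n I_n (a partition into finite sets) and 0 < λ < 1. For every finitely supported scalar sequence (a_n), λ·‖∑_n a_n u_n‖_{G_λ(F)} ≤ max( ‖∑_n a_n (1/#I_n)∑_{j∈I_n} u_j‖_F , sup_n|a_n| ) ≤ ‖∑_n a_n u_n‖_{G_+(F)}. -/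
/-- The Schreier-like norm `‖x‖_F = max(‖x‖_∞, sup_{s ∈ F} ∑_{k ∈ s} |x k|)` on sequences. -/
noncomputable def schreierNorm (F : Set (Finset ℕ)) (x : ℕ → ℝ) : ℝ :=
  max (⨆ n, |x n|) (⨆ s : F, ∑ k ∈ (s : Finset ℕ), |x k|)

/-- The Schreier-like space `X_F`, realized as the set of sequences that can be approximated
in `‖·‖_F` by finitely supported sequences (the completion of `c₀₀` under `‖·‖_F`). -/
def SchreierSpaceSet (F : Set (Finset ℕ)) : Set (ℕ → ℝ) :=
  {x | ∀ ε : ℝ, 0 < ε → ∃ y : ℕ → ℝ, (Function.support y).Finite ∧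
    schreierNorm F (x - y) ≤ ε}

/-- `F` is a pre-compact family: every subset of `ℕ` in the closure of `F` inside `2^ℕ`
(with the product topology) is finite. -/
def IsPrecompactFam (F : Set (Finset ℕ)) : Prop :=
  ∀ X : Set ℕ, (∀ t : Finset ℕ, ∃ s ∈ F, ∀ k ∈ t, (k ∈ X ↔ k ∈ s)) → X.Finite

/-- `s[λ] = {n : #(s ∩ Iₙ) ≥ λ #Iₙ}`, where `π` assigns to each point the index of its piece. -/
noncomputable def secLam (In : ℕ → Finset ℕ) (π : ℕ → ℕ) (lam : ℝ) (s : Finset ℕ) : Finset ℕ :=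
  (s.image π).filter fun n => lam * ((In n).card : ℝ) ≤ ((s ∩ In n).card : ℝ)

/-- `G_λ(F) = {s[λ] : s ∈ F}`. -/
noncomputable def GLam (In : ℕ → Finset ℕ) (π : ℕ → ℕ) (lam : ℝ) (F : Set (Finset ℕ)) :
    Set (Finset ℕ) :=
  {t | ∃ s ∈ F, t = secLam In π lam s}

/-- `G₊(F) = {s[+] : s ∈ F}`, where `s[+] = {n : s ∩ Iₙ ≠ ∅}`. -/
def GPlus (In : ℕ → Finset ℕ) (π : ℕ → ℕ) (F : Set (Finset ℕ)) : Set (Finset ℕ) :=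
  {t | ∃ s ∈ F, t = s.image π}

/-- For a pre-compact family `F` on `ℕ = ⋃ₙ Iₙ` and `0 < λ < 1`: for every finitely
supported scalar sequence `a`,
`λ ‖∑ aₙ uₙ‖_{G_λ(F)} ≤ max(‖∑ₙ aₙ (1/#Iₙ) ∑_{j∈Iₙ} uⱼ‖_F, supₙ|aₙ|) ≤ ‖∑ aₙ uₙ‖_{G₊(F)}`. -/
theorem schreier_average_norm_estimates (In : ℕ → Finset ℕ) (π : ℕ → ℕ)
    (hne : ∀ n, (In n).Nonempty) (hdisj : ∀ m n, m ≠ n → Disjoint (In m) (In n))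
    (hπ : ∀ j, j ∈ In (π j))
    (F : Set (Finset ℕ)) (hF : IsPrecompactFam F)
    (lam : ℝ) (hlam0 : 0 < lam) (hlam1 : lam < 1)
    (a : ℕ → ℝ) (ha : (Function.support a).Finite) :
    lam * schreierNorm (GLam In π lam F) a ≤
      max (schreierNorm F fun j => a (π j) / ((In (π j)).card : ℝ)) (⨆ n, |a n|) ∧
    max (schreierNorm F fun j => a (π j) / ((In (π j)).card : ℝ)) (⨆ n, |a n|) ≤
      schreierNorm (GPlus In π F) a := by
  classical
  set b : ℕ → ℝ := fun j => a (π j) / ((In (π j)).card : ℝ) with hbdef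
  have hcard : ∀ n, (0 : ℝ) < ((In n).card : ℝ) := fun n => by
    exact_mod_cast Finset.card_pos.2 (hne n)
  -- fibers of π inside s are s ∩ In n
  have hfiber : ∀ (s : Finset ℕ) (n : ℕ),
      s.filter (fun k => π k = n) = s ∩ In n := by
    intro s n
    ext k
    simp only [Finset.mem_filter, Finset.mem_inter]
    constructor
    · rintro ⟨hk, rfl⟩; exact ⟨hk, hπ k⟩
    · rintro ⟨hk, hkn⟩
      refine ⟨hk, ?_⟩
      by_contra h
      exact (hdisj _ _ h).forall_ne_finset (hπ k) hkn rfl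
  -- key: sum of |b| over s equals weighted sum over image
  have key : ∀ s : Finset ℕ, ∑ k ∈ s, |b k| =
      ∑ n ∈ s.image π, ((s ∩ In n).card : ℝ) / ((In n).card : ℝ) * |a n| := by
    intro s
    have h1 : ∀ k, |b k| = (fun n => |a n| / ((In n).card : ℝ)) (π k) := by
      intro k
      simp only [hbdef, abs_div, Nat.abs_cast]
    calc ∑ k ∈ s, |b k| = ∑ k ∈ s, (fun n => |a n| / ((In n).card : ℝ)) (π k) := by
          simp only [h1]
      _ = ∑ n ∈ s.image π, (s.filter fun k => π k = n).card •
            (|a n| / ((In n).card : ℝ)) := Finset.sum_comp (fun n => |a n| / ((In n).card : ℝ)) π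
      _ = ∑ n ∈ s.image π, ((s ∩ In n).card : ℝ) / ((In n).card : ℝ) * |a n| := by
          refine Finset.sum_congr rfl fun n _ => ?_
          rw [hfiber, nsmul_eq_mul]
          ring
  -- global bound C
  set C : ℝ := ∑ n ∈ ha.toFinset, |a n| with hCdef
  have hC0 : 0 ≤ C := Finset.sum_nonneg fun _ _ => abs_nonneg _
  have habsC : ∀ n, |a n| ≤ C := by
    intro n
    by_cases h : a n = 0
    · simp [h, hC0]
    · exact Finset.single_le_sum (fun i _ => abs_nonneg (a i))
        (ha.mem_toFinset.2 h)
  have hsumC : ∀ t : Finset ℕ, ∑ n ∈ t, |a n| ≤ C := by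
    intro t
    have h1 : ∑ n ∈ t, |a n| = ∑ n ∈ t ∩ ha.toFinset, |a n| := by
      refine (Finset.sum_subset Finset.inter_subset_left fun n hn hn' => ?_).symm
      have : a n = 0 := by
        by_contra h
        exact hn' (Finset.mem_inter.2 ⟨hn, ha.mem_toFinset.2 h⟩)
      simp [this]
    rw [h1]
    exact Finset.sum_le_sum_of_subset_of_nonneg Finset.inter_subset_right
      fun n _ _ => abs_nonneg _
  have hbddA : BddAbove (Set.range fun n => |a n|) := by
    refine ⟨C, ?_⟩; rintro x ⟨n, rfl⟩; exact habsC n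
  have hsupA0 : 0 ≤ ⨆ n, |a n| :=
    le_trans (abs_nonneg (a 0)) (le_ciSup hbddA 0)
  have hsupAC : (⨆ n, |a n|) ≤ C := Real.iSup_le habsC hC0
  -- sum of |b| over s bounded by sum of |a| over image
  have hbsum : ∀ s : Finset ℕ, ∑ k ∈ s, |b k| ≤ ∑ n ∈ s.image π, |a n| := by
    intro s
    rw [key s]
    refine Finset.sum_le_sum fun n _ => ?_
    have hr : ((s ∩ In n).card : ℝ) / ((In n).card : ℝ) ≤ 1 := by
      rw [div_le_one (hcard n)]
      exact_mod_cast Finset.card_le_card (Finset.inter_subset_right)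
    calc ((s ∩ In n).card : ℝ) / ((In n).card : ℝ) * |a n| ≤ 1 * |a n| :=
          mul_le_mul_of_nonneg_right hr (abs_nonneg _)
      _ = |a n| := one_mul _
  have hbC : ∀ s : Finset ℕ, ∑ k ∈ s, |b k| ≤ C :=
    fun s => le_trans (hbsum s) (hsumC _)
  -- bddAbove for the various suprema
  have hbddGP : BddAbove (Set.range fun t : GPlus In π F =>
      ∑ n ∈ (t : Finset ℕ), |a n|) := by
    refine ⟨C, ?_⟩; rintro x ⟨t, rfl⟩; exact hsumC _
  have hbddFb : BddAbove (Set.range fun s : F => ∑ k ∈ (s : Finset ℕ), |b k|) := by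
    refine ⟨C, ?_⟩; rintro x ⟨s, rfl⟩; exact hbC _
  constructor
  · -- first inequality
    rw [schreierNorm, mul_max_of_nonneg _ _ hlam0.le]
    refine max_le ?_ ?_
    · refine le_trans ?_ (le_max_right _ _)
      exact mul_le_of_le_one_left hsupA0 hlam1.le
    · rw [Real.mul_iSup_of_nonneg hlam0.le]
      refine Real.iSup_le ?_ (le_trans hsupA0 (le_max_right _ _))
      rintro ⟨t, s, hs, rfl⟩
      have h1 : lam * ∑ n ∈ secLam In π lam s, |a n| ≤
          ∑ n ∈ secLam In π lam s, ((s ∩ In n).card : ℝ) / ((In n).card : ℝ) * |a n| := by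
        rw [Finset.mul_sum]
        refine Finset.sum_le_sum fun n hn => ?_
        have hn' : lam * ((In n).card : ℝ) ≤ ((s ∩ In n).card : ℝ) :=
          (Finset.mem_filter.1 hn).2
        have : lam ≤ ((s ∩ In n).card : ℝ) / ((In n).card : ℝ) :=
          (le_div_iff₀ (hcard n)).2 hn'
        exact mul_le_mul_of_nonneg_right this (abs_nonneg _)
      have h2 : ∑ n ∈ secLam In π lam s, ((s ∩ In n).card : ℝ) / ((In n).card : ℝ) * |a n|
          ≤ ∑ k ∈ s, |b k| := by
        rw [key s]
        refine Finset.sum_le_sum_of_subset_of_nonneg (Finset.filter_subset _ _)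
          fun n _ _ => ?_
        exact mul_nonneg (div_nonneg (Nat.cast_nonneg _) (Nat.cast_nonneg _)) (abs_nonneg _)
      have h3 : ∑ k ∈ s, |b k| ≤ ⨆ s' : F, ∑ k ∈ (s' : Finset ℕ), |b k| :=
        le_ciSup hbddFb ⟨s, hs⟩
      refine le_trans (le_trans (le_trans h1 h2) h3) ?_
      exact le_trans (le_max_right _ _) (le_max_left _ _)
  · -- second inequality
    rw [schreierNorm, schreierNorm]
    refine max_le (max_le ?_ ?_) (le_max_left _ _)
    · -- sup |b j| ≤ sup |a n|
      refine le_trans ?_ (le_max_left _ _)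
      refine ciSup_le fun j => ?_
      have h1 : |b j| ≤ |a (π j)| := by
        rw [hbdef]
        simp only [abs_div, Nat.abs_cast]
        exact div_le_self (abs_nonneg _) (by exact_mod_cast Finset.card_pos.2 (hne (π j)))
      exact le_trans h1 (le_ciSup hbddA (π j))
    · -- sup over F of sum |b| ≤ sup over GPlus of sum |a|
      refine Real.iSup_le ?_ (le_trans hsupA0 (le_max_left _ _))
      rintro ⟨s, hs⟩
      refine le_trans (hbsum s) (le_trans ?_ (le_max_right _ _))
      exact le_ciSup hbddGP ⟨s.image π, s, hs, rfl⟩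
end

section
/- For every 0 < ε < 1 there exists a partition ℕ = ⋃_n I_n into finite sets and a pre-compact family F of finite subsets of ℕ such that: (a) F is not 4-large in any infinite M ⊆ ℕ (i.e. every infinite M has an infinite subset K with #(s∩K) ≤ 3 for all s∈F); (b) G_{1−ε}(F) = G_+(F) = the Schreier barrier {u ⊆ ℕ : #u = min u}; (c) for every s ∈ F, s ∩ I_n = I_n where n is minimal with s ∩ I_n ≠ ∅. Consequently T-families exist. -/
/-- The Schreier barrier `{u : #u = min u}`. -/
def SchreierBarrier : Set (Finset ℕ) :=
  {u | ∃ h : u.Nonempty, u.card = u.min' h}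

/-!
Fix `q ≥ 1/ε`. Code the points of the block `Iₙ` by tuples `a = (a_ℓ)_{ℓ<n}` with
`a_ℓ ∈ {0, …, ℓ²q}ⁿ`. A Schreier set `u`, with `m = #u = min u`, is spread to the set `s_u`
consisting of all of `I_m` and, in `Iₙ` for every other `n ∈ u`, of the codes whose row `a_m`
is injective on `u ∩ [0, n)` (an intersection of Erdős–Hajnal sets `A_{i,j}`). A union bound
over the at most `m²` pairs of `u` shows that these codes fill a fraction at least
`1 - m²/(m²q + 1) ≥ 1 - ε` of `Iₙ`, which gives `G_{1-ε} = G₊ =` the Schreier barrier, and (c);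
pre-compactness follows from `#u = min u`.

Against `4`-largeness in `M`, pick a point of `M` in each of infinitely many blocks and colour
a pair `i < n` at level `ℓ` by the entry `a_ℓ(i)` of the code picked in `Iₙ`. Ramsey's theorem
applied level by level, followed by a diagonal sequence, gives an infinite `K` on which the
level-`ℓ` colour is constant above `ℓ`. Four points `b₁ < b₂ < b₃ < a` of `K` in `s_u` would
then force `a_m(b₂) = a_m(b₃)` for the code of `a`, against injectivity.
-/

open Finset Function

theorem card_filter_apply_eq_apply_mul_le {ι κ : Type*} [Fintype ι] [DecidableEq ι]
    [Fintype κ] [DecidableEq κ] {β : ι → Type*} [∀ ℓ, Fintype (β ℓ)] [∀ ℓ, DecidableEq (β ℓ)]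
    (m : ι) {i j : κ} (hij : i ≠ j) :
    #{a : (ℓ : ι) → κ → β ℓ | a m i = a m j} * Fintype.card (β m) ≤
      Fintype.card ((ℓ : ι) → κ → β ℓ) := by
  -- `a m j` can be read off from `a m i`, so overwriting it loses nothing
  let recolour (x : {a : (ℓ : ι) → κ → β ℓ // a m i = a m j} × β m) : (ℓ : ι) → κ → β ℓ :=
    update x.1.1 m (update (x.1.1 m) j x.2)
  have hinj : Injective recolour := by
    rintro ⟨⟨a, ha⟩, b⟩ ⟨⟨a', ha'⟩, b'⟩ h
    have hm := congrFun h m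
    simp only [recolour, update_self] at hm
    have hb : b = b' := by simpa using congrFun hm j
    have hi : a m i = a' m i := by simpa [hij] using congrFun hm i
    have ha : a = a' := by
      ext ℓ k
      by_cases hℓ : ℓ = m
      · subst hℓ
        by_cases hk : k = j
        · subst hk; rw [← ha, ← ha', hi]
        · simpa [hk] using congrFun hm k
      · simpa [recolour, hℓ] using congrFun (congrFun h ℓ) k
    subst ha hb; rfl
  simpa [Fintype.card_subtype] using Fintype.card_le_of_injective recolour hinj

theorem card_filter_not_injOn_mul_le {ι κ : Type*} [Fintype ι] [DecidableEq ι]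
    [Fintype κ] [DecidableEq κ] {β : ι → Type*} [∀ ℓ, Fintype (β ℓ)] [∀ ℓ, DecidableEq (β ℓ)]
    (m : ι) (T : Finset κ) [DecidablePred fun a : (ℓ : ι) → κ → β ℓ => Set.InjOn (a m) T] :
    #{a : (ℓ : ι) → κ → β ℓ | ¬ Set.InjOn (a m) T} * Fintype.card (β m) ≤
      #T * #T * Fintype.card ((ℓ : ι) → κ → β ℓ) := by
  have hsub : ({a | ¬ Set.InjOn (a m) T} : Finset ((ℓ : ι) → κ → β ℓ)) ⊆
      T.offDiag.biUnion fun p => {a | a m p.1 = a m p.2} := by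
    intro a ha
    simp only [Set.InjOn, not_forall, mem_filter, mem_univ, true_and, mem_coe] at ha
    obtain ⟨i, hi, j, hj, hij, hne⟩ := ha
    exact mem_biUnion.2 ⟨(i, j), mem_offDiag.2 ⟨hi, hj, hne⟩, by simpa using hij⟩
  calc #{a : (ℓ : ι) → κ → β ℓ | ¬ Set.InjOn (a m) T} * Fintype.card (β m)
      ≤ (∑ p ∈ T.offDiag, #{a : (ℓ : ι) → κ → β ℓ | a m p.1 = a m p.2}) * Fintype.card (β m) :=
        Nat.mul_le_mul_right _ ((card_le_card hsub).trans card_biUnion_le)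
    _ ≤ ∑ p ∈ T.offDiag, Fintype.card ((ℓ : ι) → κ → β ℓ) := by
        rw [sum_mul]
        exact sum_le_sum fun p hp =>
          card_filter_apply_eq_apply_mul_le m (mem_offDiag.1 hp).2.2
    _ ≤ #T * #T * Fintype.card ((ℓ : ι) → κ → β ℓ) := by
        rw [sum_const, smul_eq_mul, offDiag_card]
        exact Nat.mul_le_mul_right _ (Nat.sub_le _ _)

theorem Set.Infinite.exists_infinite_fiber {α β : Type*} [Finite β] {S : Set α}
    (hS : S.Infinite) (f : α → β) : ∃ v, {x ∈ S | f x = v}.Infinite := by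
  by_contra! h
  exact hS ((Set.finite_iUnion h).subset fun x hx => Set.mem_iUnion.2 ⟨f x, hx, rfl⟩)

theorem exists_infinite_monochromatic_pairs {α : Type*} [Finite α] (c : ℕ → ℕ → α)
    {S : Set ℕ} (hS : S.Infinite) :
    ∃ T ⊆ S, T.Infinite ∧ ∃ v, ∀ i ∈ T, ∀ n ∈ T, i < n → c i n = v := by
  have step (A : {A : Set ℕ // A.Infinite}) : ∃ B : {B : Set ℕ // B.Infinite}, B.1 ⊆ A.1 ∧
      (∀ y ∈ B.1, sInf A.1 < y) ∧ ∃ v, ∀ y ∈ B.1, c (sInf A.1) y = v := by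
    obtain ⟨v, hv⟩ := (A.2.sdiff (Set.finite_Iic (sInf A.1))).exists_infinite_fiber (c (sInf A.1))
    exact ⟨⟨_, hv⟩, fun y hy => hy.1.1, fun y hy => not_le.1 hy.1.2, v, fun y hy => hy.2⟩
  choose next hsub hgt col hcol using step
  set A : ℕ → {A : Set ℕ // A.Infinite} := fun k => next^[k] ⟨S, hS⟩
  have hA_succ (k : ℕ) : A (k + 1) = next (A k) := iterate_succ_apply' _ _ _
  have hA_anti : Antitone fun k => (A k).1 :=
    antitone_nat_of_succ_le fun k => by rw [hA_succ]; exact hsub _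
  set x : ℕ → ℕ := fun k => sInf (A k).1
  have hx_mem (k : ℕ) : x k ∈ (A k).1 := Nat.sInf_mem (A k).2.nonempty
  have hx_mono : StrictMono x := strictMono_nat_of_lt_succ fun k =>
    hgt _ _ (by rw [← hA_succ]; exact hx_mem _)
  have hx_col {k j : ℕ} (hkj : k < j) : c (x k) (x j) = col (A k) :=
    hcol _ _ (by rw [← hA_succ]; exact hA_anti hkj (hx_mem j))
  obtain ⟨v, hv⟩ := Set.infinite_univ.exists_infinite_fiber fun k => col (A k)
  refine ⟨x '' {k | k ∈ Set.univ ∧ col (A k) = v}, ?_, hv.image hx_mono.injective.injOn, v, ?_⟩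
  · rintro _ ⟨k, -, rfl⟩
    exact hA_anti (Nat.zero_le k) (hx_mem k)
  · rintro _ ⟨k, ⟨-, hk⟩, rfl⟩ _ ⟨j, -, rfl⟩ hlt
    rw [hx_col (hx_mono.lt_iff_lt.1 hlt), hk]

theorem exists_infinite_diagonal {R : ℕ → Set ℕ} (hR : Antitone R) (hinf : ∀ ℓ, (R ℓ).Infinite) :
    ∃ K ⊆ R 0, K.Infinite ∧ ∀ h ∈ K, ∀ i ∈ K, h < i → i ∈ R h := by
  choose f hfR hflt using fun ℓ => (hinf ℓ).exists_gt ℓ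
  set x : ℕ → ℕ := fun k => f^[k + 1] 0
  have hx_succ (k : ℕ) : x (k + 1) = f (x k) := iterate_succ_apply' _ _ _
  have hx_mono : StrictMono x := strictMono_nat_of_lt_succ fun k => by rw [hx_succ]; exact hflt _
  refine ⟨Set.range x, ?_, Set.infinite_range_of_injective hx_mono.injective, ?_⟩
  · rintro _ ⟨k, rfl⟩
    cases k with
    | zero => exact hfR 0
    | succ k => rw [hx_succ]; exact hR (Nat.zero_le _) (hfR _)
  · rintro _ ⟨k, rfl⟩ _ ⟨j, rfl⟩ hlt
    obtain ⟨j, rfl⟩ := Nat.exists_eq_add_of_lt (hx_mono.lt_iff_lt.1 hlt)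
    rw [hx_succ]
    exact hR (hx_mono.monotone (Nat.le_add_right k j)) (hfR _)

theorem exists_infinite_eventually_monochromatic {α : ℕ → Type*} [∀ ℓ, Finite (α ℓ)]
    (c : ∀ ℓ, ℕ → ℕ → α ℓ) {S : Set ℕ} (hS : S.Infinite) :
    ∃ K ⊆ S, K.Infinite ∧ ∀ ℓ, ∃ v, ∀ h ∈ K, ∀ i ∈ K, ∀ n ∈ K,
      ℓ ≤ h → h < i → i < n → c ℓ i n = v := by
  choose T hTS hT v hv using fun ℓ (A : {A : Set ℕ // A.Infinite}) =>
    exists_infinite_monochromatic_pairs (c ℓ) A.2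
  set A : ℕ → {A : Set ℕ // A.Infinite} :=
    fun ℓ => Nat.rec ⟨S, hS⟩ (fun ℓ A => ⟨T ℓ A, hT ℓ A⟩) ℓ with hA
  have hA_anti : Antitone fun ℓ => (A ℓ).1 := antitone_nat_of_succ_le fun ℓ => hTS ℓ (A ℓ)
  obtain ⟨K, hKA, hK, hdiag⟩ := exists_infinite_diagonal (R := fun ℓ => (A (ℓ + 1)).1)
    (fun _ _ h => hA_anti (Nat.succ_le_succ h)) fun ℓ => (A (ℓ + 1)).2
  refine ⟨K, fun y hy => hA_anti (Nat.zero_le 1) (hKA hy), hK, fun ℓ => ⟨v ℓ (A ℓ), ?_⟩⟩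
  intro h hh i hi n hn hℓh hhi hin
  have hsub : (A (h + 1)).1 ⊆ (A (ℓ + 1)).1 := hA_anti (Nat.succ_le_succ hℓh)
  exact hv ℓ (A ℓ) i (hsub (hdiag h hh i hi hhi))
    n (hsub (hdiag h hh n hn (hhi.trans hin))) hin

theorem Set.Infinite.image_of_finite_fibres {α β : Type*} {f : α → β}
    (hf : ∀ b, {a | f a = b}.Finite) {X : Set α} (hX : X.Infinite) : (f '' X).Infinite :=
  fun h => hX ((h.preimage' fun b _ => hf b).subset (Set.subset_preimage_image f X))

theorem Finset.card_le_three_of_forall_not_chain {W : Finset ℕ}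
    (h : ∀ a ∈ W, ∀ b ∈ W, ∀ c ∈ W, ∀ d ∈ W, a < b → b < c → c < d → False) : #W ≤ 3 := by
  by_contra! hW
  set f := W.orderEmbOfFin rfl
  exact h (f ⟨0, by omega⟩) (W.orderEmbOfFin_mem rfl _) (f ⟨1, by omega⟩)
    (W.orderEmbOfFin_mem rfl _) (f ⟨2, by omega⟩) (W.orderEmbOfFin_mem rfl _) (f ⟨3, hW⟩)
    (W.orderEmbOfFin_mem rfl _) (by simp [f]) (by simp [f]) (by simp [f])

theorem isPrecompactFam_of_card_image_le {F : Set (Finset ℕ)} (π : ℕ → ℕ)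
    (hπ : ∀ n, {x | π x = n}.Finite) (hF : ∀ s ∈ F, ∀ x ∈ s, #(s.image π) ≤ π x) :
    IsPrecompactFam F := by
  intro X hX
  by_contra hXinf
  obtain ⟨z, hz⟩ := Set.Infinite.nonempty hXinf
  obtain ⟨V, hVX, hV⟩ :=
    (Set.Infinite.image_of_finite_fibres hπ hXinf).exists_subset_card_eq (π z + 1)
  obtain ⟨t, htX, rfl⟩ := Finset.subset_set_image_iff.1 hVX
  obtain ⟨s, hsF, hs⟩ := hX (insert z t)
  have hts : insert z t ⊆ s := fun k hk => (hs k hk).1 <| by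
    rcases Finset.mem_insert.1 hk with rfl | hk
    exacts [hz, htX hk]
  have := (card_le_card (image_subset_image ((subset_insert z t).trans hts))).trans
    (hF s hsF z (hts (mem_insert_self z t)))
  omega

lemma Set.setOf_exists_mem_image_eq_of_leftInvOn {α β : Type*} {S : Set α} {f : α → β}
    {g : β → α} (h : Set.LeftInvOn g f S) : {t | ∃ s ∈ f '' S, t = g s} = S := by
  ext t
  constructor
  · rintro ⟨_, ⟨u, hu, rfl⟩, rfl⟩
    rwa [h hu]
  · exact fun ht => ⟨f t, ⟨t, ht, rfl⟩, (h ht).symm⟩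

lemma mem_schreierBarrier_iff {u : Finset ℕ} : u ∈ SchreierBarrier ↔ #u ∈ u ∧ ∀ n ∈ u, #u ≤ n := by
  constructor
  · rintro ⟨hne, hu⟩
    exact ⟨hu ▸ u.min'_mem hne, fun n hn => hu ▸ u.min'_le n hn⟩
  · rintro ⟨hu, hmin⟩
    exact ⟨⟨_, hu⟩, le_antisymm (u.le_min' _ _ hmin) (u.min'_le _ hu)⟩

namespace TFamily

section Blocks

variable {C : ℕ → Type*} (e : (Σ n, C n) ≃ ℕ)

def blockEmb (n : ℕ) : C n ↪ ℕ := (Embedding.sigmaMk n).trans e.toEmbedding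

def blockIndex (j : ℕ) : ℕ := (e.symm j).1

@[simp]
lemma blockIndex_blockEmb (n : ℕ) (a : C n) : blockIndex e (blockEmb e n a) = n := by
  simp [blockIndex, blockEmb]

variable [∀ n, Fintype (C n)]

/-- The block `Iₙ`, whose points are coded through `e` by `C n`. -/
def block (n : ℕ) : Finset ℕ := univ.map (blockEmb e n)

variable {e}

lemma mem_block {n j : ℕ} : j ∈ block e n ↔ blockIndex e j = n := by
  obtain ⟨⟨m, a⟩, rfl⟩ := e.surjective j
  simp only [block, blockEmb, blockIndex, mem_map, mem_univ, true_and, Embedding.trans_apply,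
    Equiv.coe_toEmbedding, Embedding.sigmaMk_apply, e.apply_eq_iff_eq, e.symm_apply_apply,
    Sigma.mk.inj_iff]
  constructor
  · rintro ⟨b, rfl, -⟩
    rfl
  · rintro rfl
    exact ⟨a, rfl, HEq.rfl⟩

lemma mem_block_blockIndex (j : ℕ) : j ∈ block e (blockIndex e j) := mem_block.2 rfl

lemma disjoint_block {m n : ℕ} (h : m ≠ n) : Disjoint (block e m) (block e n) :=
  disjoint_left.2 fun _ hm hn => h ((mem_block.1 hm).symm.trans (mem_block.1 hn))

lemma block_nonempty [∀ n, Nonempty (C n)] (n : ℕ) : (block e n).Nonempty :=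
  univ_nonempty.map

lemma card_block (n : ℕ) : #(block e n) = Fintype.card (C n) := by
  rw [block, card_map, card_univ]

lemma finite_setOf_blockIndex_eq (n : ℕ) : {j | blockIndex e j = n}.Finite :=
  (block e n).finite_toSet.subset fun _ => mem_block.2

lemma exists_blockEmb_eq {n j : ℕ} (h : blockIndex e j = n) : ∃ a, blockEmb e n a = j := by
  simpa [block] using mem_block.2 h

end Blocks

abbrev Code (r : ℕ → ℕ) (n : ℕ) : Type := (ℓ : Fin n) → Fin n → Fin (r ℓ + 1)

noncomputable def colourBound (ε : ℝ) (m : ℕ) : ℕ := m * m * ⌈ε⁻¹⌉₊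

lemma mul_self_le_colourBound {ε : ℝ} (hε : 0 < ε) (m : ℕ) :
    (m * m : ℝ) ≤ ε * (colourBound ε m + 1) := by
  have hceil : 1 ≤ ε * ⌈ε⁻¹⌉₊ := by
    calc (1 : ℝ) = ε * ε⁻¹ := (mul_inv_cancel₀ hε.ne').symm
      _ ≤ ε * ⌈ε⁻¹⌉₊ := mul_le_mul_of_nonneg_left (Nat.le_ceil _) hε.le
  have hm : (0 : ℝ) ≤ m * m := by positivity
  push_cast [colourBound]
  nlinarith

section Family

open scoped Classical

variable {r : ℕ → ℕ}

/-- `a` lies in the Erdős–Hajnal sets `A_{i,j}` of its row `#u`, for all `i ≠ j` in `u`. -/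
def IsSeparating (u : Finset ℕ) {n : ℕ} (a : Code r n) : Prop :=
  ∀ h : #u < n, Set.InjOn (a ⟨#u, h⟩) {i | (i : ℕ) ∈ u}

theorem card_isSeparating_ge {ε : ℝ} (hε : 0 ≤ ε) {u : Finset ℕ}
    (hr : (#u * #u : ℝ) ≤ ε * (r #u + 1)) (n : ℕ) :
    (1 - ε) * Fintype.card (Code r n) ≤ #{a : Code r n | IsSeparating u a} := by
  by_cases hn : #u < n
  · set T : Finset (Fin n) := {i | (i : ℕ) ∈ u}
    set N := Fintype.card (Code r n)
    set bad := #{a : Code r n | ¬ Set.InjOn (a ⟨#u, hn⟩) T}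
    have hT : #T ≤ #u :=
      card_le_card_of_injOn Fin.val (by intro i; simp [T]) Fin.val_injective.injOn
    have hbad : (bad : ℝ) * (r #u + 1) ≤ #u * #u * N := by
      have := card_filter_not_injOn_mul_le (β := fun ℓ : Fin n => Fin (r ℓ + 1)) ⟨#u, hn⟩ T
      rw [Fintype.card_fin] at this
      exact_mod_cast this.trans (Nat.mul_le_mul_right _ (Nat.mul_le_mul hT hT))
    have hbad_le : (bad : ℝ) ≤ ε * N := by
      refine le_of_mul_le_mul_right ?_ (by positivity : (0 : ℝ) < r #u + 1)
      nlinarith [(Nat.cast_nonneg N : (0 : ℝ) ≤ N)]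
    have hsep : ({a : Code r n | IsSeparating u a} : Finset _) =
        ({a : Code r n | Set.InjOn (a ⟨#u, hn⟩) T} : Finset _) := by
      ext a; simp [IsSeparating, hn, T]
    have hsplit : (#{a : Code r n | IsSeparating u a} : ℝ) + bad = N := by
      rw [hsep]
      exact_mod_cast card_filter_add_card_filter_not (s := univ) _
    linarith
  · have : ({a : Code r n | IsSeparating u a} : Finset _) = univ :=
      filter_true_of_mem fun a _ h => absurd h hn
    rw [this, card_univ]
    nlinarith [(Nat.cast_nonneg _ : (0:ℝ) ≤ Fintype.card (Code r n))]

variable (e : (Σ n, Code r n) ≃ ℕ)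

noncomputable def separatingPart (u : Finset ℕ) (n : ℕ) : Finset ℕ :=
  ({a : Code r n | IsSeparating u a} : Finset _).map (blockEmb e n)

/-- The set `s_u`, with `#u` standing for `min u`: the two agree on the Schreier barrier, and
`#u` needs no nonemptiness proof. -/
noncomputable def lift (u : Finset ℕ) : Finset ℕ :=
  block e #u ∪ (u.erase #u).biUnion (separatingPart e u)

variable {e}

lemma mem_separatingPart {u : Finset ℕ} {n : ℕ} {a : Code r n} :
    blockEmb e n a ∈ separatingPart e u n ↔ IsSeparating u a := by
  simp [separatingPart]

lemma separatingPart_subset_block (u : Finset ℕ) (n : ℕ) : separatingPart e u n ⊆ block e n :=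
  map_subset_map.2 (filter_subset _ _)

lemma block_subset_lift (u : Finset ℕ) : block e #u ⊆ lift e u := subset_union_left

lemma separatingPart_subset_lift {u : Finset ℕ} {n : ℕ} (hn : n ∈ u) (hne : n ≠ #u) :
    separatingPart e u n ⊆ lift e u :=
  (subset_biUnion_of_mem _ (mem_erase.2 ⟨hne, hn⟩)).trans subset_union_right

lemma mem_lift {u : Finset ℕ} {j : ℕ} : j ∈ lift e u ↔ blockIndex e j = #u ∨
    blockIndex e j ∈ u.erase #u ∧ j ∈ separatingPart e u (blockIndex e j) := by
  rw [lift, mem_union, mem_biUnion, mem_block]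
  refine or_congr Iff.rfl ⟨?_, fun h => ⟨_, h⟩⟩
  rintro ⟨n, hn, hj⟩
  obtain rfl := mem_block.1 (separatingPart_subset_block u n hj)
  exact ⟨hn, hj⟩

lemma blockIndex_mem_of_mem_lift {u : Finset ℕ} (hu : #u ∈ u) {j : ℕ} (hj : j ∈ lift e u) :
    blockIndex e j ∈ u := by
  rcases mem_lift.1 hj with h | h
  exacts [h ▸ hu, mem_of_mem_erase h.1]

lemma image_lift {u : Finset ℕ} (hu : #u ∈ u) (hsep : ∀ n, (separatingPart e u n).Nonempty) :
    (lift e u).image (blockIndex e) = u := by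
  refine Subset.antisymm (image_subset_iff.2 fun j => blockIndex_mem_of_mem_lift hu) ?_
  intro n hn
  obtain ⟨j, hj, hjn⟩ : ∃ j ∈ lift e u, j ∈ block e n := by
    by_cases hne : n = #u
    · subst hne
      obtain ⟨j, hj⟩ := block_nonempty (e := e) #u
      exact ⟨j, block_subset_lift u hj, hj⟩
    · obtain ⟨j, hj⟩ := hsep n
      exact ⟨j, separatingPart_subset_lift hn hne hj, separatingPart_subset_block u n hj⟩
  exact mem_image.2 ⟨j, hj, mem_block.1 hjn⟩

variable {ε : ℝ} {u : Finset ℕ}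

lemma card_separatingPart_ge (hε : 0 ≤ ε) (hr : (#u * #u : ℝ) ≤ ε * (r #u + 1)) (n : ℕ) :
    (1 - ε) * #(block e n) ≤ #(separatingPart e u n) := by
  rw [separatingPart, card_map, card_block]
  exact card_isSeparating_ge hε hr n

lemma separatingPart_nonempty (hε0 : 0 ≤ ε) (hε1 : ε < 1) (hr : (#u * #u : ℝ) ≤ ε * (r #u + 1))
    (n : ℕ) : (separatingPart e u n).Nonempty := by
  have hblock : (0 : ℝ) < #(block e n) := by exact_mod_cast (block_nonempty n).card_pos
  rw [← card_pos, ← Nat.cast_pos (α := ℝ)]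
  exact (mul_pos (by linarith) hblock).trans_le (card_separatingPart_ge hε0 hr n)

theorem secLam_lift (hε0 : 0 ≤ ε) (hε1 : ε < 1) (hr : (#u * #u : ℝ) ≤ ε * (r #u + 1))
    (hu : #u ∈ u) : secLam (block e) (blockIndex e) (1 - ε) (lift e u) = u := by
  rw [secLam, image_lift hu (separatingPart_nonempty hε0 hε1 hr)]
  refine filter_true_of_mem fun n hn => ?_
  obtain rfl | hne := eq_or_ne n #u
  · rw [inter_eq_right.2 (block_subset_lift u)]
    nlinarith [(Nat.cast_nonneg _ : (0 : ℝ) ≤ #(block e #u))]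
  · refine (card_separatingPart_ge hε0 hr n).trans (Nat.cast_le.2 (card_le_card ?_))
    exact subset_inter (separatingPart_subset_lift hn hne) (separatingPart_subset_block u n)

theorem lift_inter_block_eq_block (hu : #u ∈ u) (hmin : ∀ n ∈ u, #u ≤ n) {n : ℕ}
    (hn : (lift e u ∩ block e n).Nonempty) (hprev : ∀ m < n, lift e u ∩ block e m = ∅) :
    lift e u ∩ block e n = block e n := by
  obtain ⟨j, hj⟩ := hn
  rw [mem_inter, mem_block] at hj
  have hnu : n ∈ u := hj.2 ▸ blockIndex_mem_of_mem_lift hu hj.1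
  obtain rfl : n = #u := by
    by_contra hne
    have := hprev #u ((hmin n hnu).lt_of_ne (Ne.symm hne))
    rw [inter_eq_right.2 (block_subset_lift u)] at this
    exact (block_nonempty #u).ne_empty this
  exact inter_eq_right.2 (block_subset_lift u)

def entryColouring (pick : ∀ n, Code r n) (ℓ i n : ℕ) : Fin (r ℓ + 1) :=
  if h : ℓ < n ∧ i < n then pick n ⟨ℓ, h.1⟩ ⟨i, h.2⟩ else 0

lemma card_filter_mem_lift_le_three (pick : ∀ n, Code r n) {K : Set ℕ}
    (hK : ∀ ℓ, ∃ v, ∀ h ∈ K, ∀ i ∈ K, ∀ n ∈ K,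
      ℓ ≤ h → h < i → i < n → entryColouring pick ℓ i n = v)
    (hmin : ∀ n ∈ u, #u ≤ n) :
    #{n ∈ u | n ∈ K ∧ blockEmb e n (pick n) ∈ lift e u} ≤ 3 := by
  refine card_le_three_of_forall_not_chain fun b₁ h₁ b₂ h₂ b₃ h₃ a ha h₁₂ h₂₃ h₃a => ?_
  simp only [mem_filter] at h₁ h₂ h₃ ha
  have hua : #u < a := by have := hmin b₁ h₁.1; omega
  have hsep : IsSeparating u (pick a) := by
    have := (mem_lift.1 ha.2.2).resolve_left (by simp only [blockIndex_blockEmb]; omega)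
    simpa [mem_separatingPart] using this.2
  obtain ⟨v, hv⟩ := hK #u
  have hc : entryColouring pick #u b₂ a = entryColouring pick #u b₃ a :=
    (hv b₁ h₁.2.1 b₂ h₂.2.1 a ha.2.1 (hmin _ h₁.1) h₁₂ (h₂₃.trans h₃a)).trans
      (hv b₁ h₁.2.1 b₃ h₃.2.1 a ha.2.1 (hmin _ h₁.1) (h₁₂.trans h₂₃) h₃a).symm
  simp only [entryColouring, dif_pos (And.intro hua (h₂₃.trans h₃a)),
    dif_pos (And.intro hua h₃a)] at hc
  exact h₂₃.ne (congrArg Fin.val (hsep hua h₂.1 h₃.1 hc))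

theorem exists_infinite_subset_ncard_inter_lift_le_three {M : Set ℕ} (hM : M.Infinite) :
    ∃ K ⊆ M, K.Infinite ∧ ∀ u : Finset ℕ, #u ∈ u → (∀ n ∈ u, #u ≤ n) →
      ((lift e u : Set ℕ) ∩ K).ncard ≤ 3 := by
  have hN : (blockIndex e '' M).Infinite := hM.image_of_finite_fibres finite_setOf_blockIndex_eq
  have hpick (n : ℕ) : ∃ a : Code r n, n ∈ blockIndex e '' M → blockEmb e n a ∈ M := by
    by_cases h : n ∈ blockIndex e '' M
    · obtain ⟨j, hj, rfl⟩ := h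
      obtain ⟨a, ha⟩ := exists_blockEmb_eq (e := e) (rfl : blockIndex e j = _)
      exact ⟨a, fun _ => by rwa [ha]⟩
    · exact ⟨fun _ _ => 0, fun h' => absurd h' h⟩
  choose pick hpick using hpick
  obtain ⟨K, hKN, hK, hhom⟩ := exists_infinite_eventually_monochromatic (entryColouring pick) hN
  let g (n : ℕ) : ℕ := blockEmb e n (pick n)
  have hg : Injective g := fun m n h => by simpa [g] using congrArg (blockIndex e) h
  refine ⟨g '' K, ?_, hK.image hg.injOn, fun u hu hmin => ?_⟩
  · rintro _ ⟨n, hn, rfl⟩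
    exact hpick n (hKN hn)
  set W : Finset ℕ := {n ∈ u | n ∈ K ∧ g n ∈ lift e u}
  have hsub : (lift e u : Set ℕ) ∩ g '' K ⊆ ↑(W.image g) := by
    rintro _ ⟨hs, n, hn, rfl⟩
    have hnu : n ∈ u := by simpa [g] using blockIndex_mem_of_mem_lift hu hs
    exact mem_coe.2 (mem_image_of_mem g (mem_filter.2 ⟨hnu, hn, hs⟩))
  calc ((lift e u : Set ℕ) ∩ g '' K).ncard ≤ (↑(W.image g) : Set ℕ).ncard :=
        Set.ncard_le_ncard hsub (finite_toSet _)
    _ = #(W.image g) := Set.ncard_coe_finset _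
    _ ≤ #W := card_image_le
    _ ≤ 3 := card_filter_mem_lift_le_three pick hhom hmin

end Family

end TFamily

open TFamily

/-- For every `0 < ε < 1` there are a partition `ℕ = ⋃ₙ Iₙ` into finite sets (with index
map `π`) and a pre-compact family `F` of finite subsets of `ℕ` such that: (a) `F` is not
`4`-large in any infinite `M` (every infinite `M` has an infinite subset `K` with
`#(s ∩ K) ≤ 3` for all `s ∈ F`); (b) `G_{1-ε}(F) = G₊(F) =` the Schreier barrier;
(c) each `s ∈ F` contains the whole first piece `Iₙ` that it meets. In particular,
`T`-families exist. -/
theorem exists_T_family (ε : ℝ) (hε0 : 0 < ε) (hε1 : ε < 1) :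
    ∃ (In : ℕ → Finset ℕ) (π : ℕ → ℕ),
      (∀ n, (In n).Nonempty) ∧ (∀ m n, m ≠ n → Disjoint (In m) (In n)) ∧
      (∀ j, j ∈ In (π j)) ∧
      ∃ F : Set (Finset ℕ), IsPrecompactFam F ∧
        (∀ M : Set ℕ, M.Infinite → ∃ K ⊆ M, K.Infinite ∧
          ∀ s ∈ F, ((↑s ∩ K : Set ℕ)).ncard ≤ 3) ∧
        GLam In π (1 - ε) F = SchreierBarrier ∧
        GPlus In π F = SchreierBarrier ∧
        (∀ s ∈ F, ∀ n : ℕ, (s ∩ In n).Nonempty → (∀ m < n, s ∩ In m = ∅) →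
          s ∩ In n = In n) := by
  have hr (u : Finset ℕ) := mul_self_le_colourBound hε0 #u
  obtain ⟨e⟩ : Nonempty ((Σ n, Code (colourBound ε) n) ≃ ℕ) :=
    (nonempty_denumerable _).map fun h => @Denumerable.eqv _ h
  have hS (u : Finset ℕ) (hu : u ∈ SchreierBarrier) := mem_schreierBarrier_iff.1 hu
  have himage (u : Finset ℕ) (hu : u ∈ SchreierBarrier) :=
    image_lift (e := e) (hS u hu).1 (separatingPart_nonempty hε0.le hε1 (hr u))
  refine ⟨block e, blockIndex e, fun _ => block_nonempty _, fun _ _ => disjoint_block,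
    mem_block_blockIndex, lift e '' SchreierBarrier, ?_, ?_, ?_, ?_, ?_⟩
  · refine isPrecompactFam_of_card_image_le _ (finite_setOf_blockIndex_eq (e := e)) ?_
    rintro _ ⟨u, hu, rfl⟩ j hj
    rw [himage u hu]
    exact (hS u hu).2 _ (blockIndex_mem_of_mem_lift (hS u hu).1 hj)
  · intro M hM
    obtain ⟨K, hKM, hK, hlift⟩ := exists_infinite_subset_ncard_inter_lift_le_three (e := e) hM
    exact ⟨K, hKM, hK, fun _ ⟨u, hu, hs⟩ => hs ▸ hlift u (hS u hu).1 (hS u hu).2⟩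
  · exact Set.setOf_exists_mem_image_eq_of_leftInvOn fun u hu =>
      secLam_lift hε0.le hε1 (hr u) (hS u hu).1
  · exact Set.setOf_exists_mem_image_eq_of_leftInvOn himage
  · rintro _ ⟨u, hu, rfl⟩ n
    exact lift_inter_block_eq_block (hS u hu).1 (hS u hu).2
end
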